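/- arXiv:1206.5923 — 2 statements merged into one kernel-verified Lean document; each statement's English description precedes it below -/
import Mathlib

section
/- Under conditions (a), (b) and (c), there exists an R-linear, faithful and exact functor V : E ⥤ End(T)-fgmod such that the composition of V with the forgetful functor End(T)-fgmod ⥤ ModuleCat R is naturally isomorphic to G, and such that for every object p of D the object V(S(p)) is isomorphic in End(T)-fgmod to T(p) with its tautological left End(T)-module structure, naturally in p. (This is the main construction in the proof of the paper's criterion, Proposition 2.7, in its finite-diagram form.) -/
/-!
For `u : S p ⟶ A` let `toG η u : T p ⟶ G A` be `G u ∘ η⁻¹`. By (b) every `G A` is a quotient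
`toG η w : T p ↠ G A`, and by (c) its kernel is an `End T`-submodule, so `G A` inherits an
action of `End T`. The action does not depend on the chosen quotient, and every `G f` commutes
with it, because by (a) any two maps `S p ⟶ A`, `S p' ⟶ A` factor through a single `S q`:
`S i + S i' : S p ⊞ S p' ⟶ S q` is an isomorphism, since `G` of it is one and `G` is faithful
and exact. This lifts `G` to `V : E ⥤ End(T)-fgmod` with `V ⋙ forget ≅ G`; faithfulness,
exactness and linearity of `V` follow from those of `G`, as the forgetful functor reflects
finite limits and colimits.
-/


open CategoryTheory CategoryTheory.Limits

noncomputable section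

namespace NoriCriterion

universe u

variable {R : Type u} [CommRing R]
variable {D : Type u} [SmallCategory D]
variable (T : D ⥤ ModuleCat.{u} R)

/-- The tautological left `End T`-module structure on `T.obj p`, given by
`a • x = a.app p x`. -/
def tautModule (p : D) : Module (End T) (T.obj p) where
  smul a x := a.app p x
  one_smul x := rfl
  mul_smul a b x := rfl
  smul_zero a := map_zero (a.app p).hom
  smul_add a x y := map_add (a.app p).hom x y
  add_smul a b x := by
    show ((a + b).app p) x = (a.app p) x + (b.app p) x
    rw [NatTrans.app_add]; rfl
  zero_smul x := by
    show ((0 : End T).app p) x = 0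
    rw [NatTrans.app_zero]; rfl

/-- `T.obj p`, seen as an object of `ModuleCat (End T)` via the tautological action. -/
def tautObj (p : D) : ModuleCat (End T) :=
  @ModuleCat.of (End T) _ (T.obj p) _ (tautModule T p)

/-- `T.map f` is `End T`-linear for the tautological actions. -/
def tautMap {p q : D} (f : p ⟶ q) : tautObj T p ⟶ tautObj T q :=
  @ModuleCat.ofHom (End T) _ (T.obj p) (T.obj q) _ (tautModule T p) _ (tautModule T q) (show tautObj T p →ₗ[End T] tautObj T q from
  { toFun := fun x => T.map f x
    map_add' := fun x y => map_add (T.map f).hom x y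
    map_smul' := fun a x => by
      show (T.map f) ((a.app p) x) = (a.app q) ((T.map f) x)
      exact (LinearMap.congr_fun (ModuleCat.hom_ext_iff.mp (a.naturality f)) x).symm })

/-- The tautological representation `D ⥤ ModuleCat (End T)`. -/
def tautFunctor : D ⥤ ModuleCat (End T) where
  obj p := tautObj T p
  map f := tautMap T f
  map_id p := ModuleCat.hom_ext (LinearMap.ext fun x => by
    show (T.map (𝟙 p)) x = x
    rw [T.map_id]; rfl)
  map_comp f g := ModuleCat.hom_ext (LinearMap.ext fun x => by
    show (T.map (f ≫ g)) x = (T.map g) ((T.map f) x)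
    rw [T.map_comp]; rfl)

/-- The category `End T`-fgmod of left `End T`-modules which are finitely
generated over `R` (equivalently, over `End T`). -/
def FGMod :=
  ObjectProperty.FullSubcategory (fun M : ModuleCat.{u} (End T) =>
    Module.Finite R ((ModuleCat.restrictScalars (algebraMap R (End T))).obj M))

instance : Category (FGMod T) :=
  ObjectProperty.FullSubcategory.category _

/-- The forgetful functor `End T`-fgmod `⥤ ModuleCat R`. -/
def fgForget : FGMod T ⥤ ModuleCat.{u} R :=
  ObjectProperty.ι _ ⋙ ModuleCat.restrictScalars (algebraMap R (End T))

theorem taut_fg (p : D) [h : Module.Finite R (T.obj p)] :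
    Module.Finite R
      ((ModuleCat.restrictScalars (algebraMap R (End T))).obj (tautObj T p)) := by
  let e : (T.obj p) →ₗ[R]
      ((ModuleCat.restrictScalars (algebraMap R (End T))).obj (tautObj T p)) :=
    { toFun := fun x => x
      map_add' := fun _ _ => rfl
      map_smul' := fun r x => by
        show r • x = ((algebraMap R (End T) r).app p) x
        rw [Algebra.algebraMap_eq_smul_one]
        show r • x = ((r • (𝟙 T : End T)).app p) x
        rw [NatTrans.app_smul]
        rfl }
  exact Module.Finite.of_surjective e (fun y => ⟨y, rfl⟩)

/-- The tautological representation `D ⥤ FGMod T`, `p ↦ T.obj p` with its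
tautological `End T`-module structure. -/
def tautFunctorFG [∀ p : D, Module.Finite R (T.obj p)] : D ⥤ FGMod T :=
  ObjectProperty.lift _ (tautFunctor T) (fun p => taut_fg T p)

lemma isIso_biprod_desc_of_iso {J C : Type*} [Category J] [Category C] [Preadditive C]
    [HasBinaryBiproducts C] {F F' : J ⥤ C} (e : F ≅ F') {p p' q : J} (i : p ⟶ q) (i' : p' ⟶ q)
    [IsIso (biprod.desc (F'.map i) (F'.map i'))] : IsIso (biprod.desc (F.map i) (F.map i')) := by
  have : biprod.desc (F.map i) (F.map i') = (biprod.mapIso (e.app p) (e.app p')).hom ≫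
      biprod.desc (F'.map i) (F'.map i') ≫ e.inv.app q := by
    ext <;> simp
  rw [this]
  infer_instance

def restrictScalarsIsoOfCompatible {k A : Type u} [CommRing k] [Ring A] (f : k →+* A)
    (M : ModuleCat.{u} k) [Module A M] (h : ∀ (r : k) (m : M), f r • m = r • m) :
    (ModuleCat.restrictScalars f).obj (ModuleCat.of A M) ≅ M where
  hom := ModuleCat.ofHom (X := (ModuleCat.restrictScalars f).obj (ModuleCat.of A M)) (Y := M)
    { toFun := id, map_add' := fun _ _ => rfl, map_smul' := h }
  inv := ModuleCat.ofHom (X := M) (Y := (ModuleCat.restrictScalars f).obj (ModuleCat.of A M))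
    { toFun := id, map_add' := fun _ _ => rfl, map_smul' := fun r m => (h r m).symm }

lemma algebraMap_app_apply (r : R) {p : D} (x : T.obj p) :
    (algebraMap R (End T) r).app p x = r • x := by
  rw [Algebra.algebraMap_eq_smul_one, NatTrans.app_smul]
  rfl

instance : ReflectsFiniteLimits (fgForget T) where
  reflects J _ _ := by
    have : PreservesLimitsOfShape J (ModuleCat.restrictScalars.{u} (algebraMap R (End T))) :=
      ⟨inferInstance⟩
    have : ReflectsLimitsOfShape J (ModuleCat.restrictScalars.{u} (algebraMap R (End T))) :=
      reflectsLimitsOfShape_of_reflectsIsomorphisms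
    exact inferInstanceAs (ReflectsLimitsOfShape J (ObjectProperty.ι _ ⋙ _))

instance : ReflectsFiniteColimits (fgForget T) where
  reflects J _ _ := by
    have : ReflectsColimitsOfShape J (ModuleCat.restrictScalars.{u} (algebraMap R (End T))) :=
      reflectsColimitsOfShape_of_reflectsIsomorphisms
    exact inferInstanceAs (ReflectsColimitsOfShape J (ObjectProperty.ι _ ⋙ _))

section Construction

variable {T}
variable {E : Type u} [Category.{u} E] {G : E ⥤ ModuleCat.{u} R} {S : D ⥤ E} (η : S ⋙ G ≅ T)

def toG {p : D} {A : E} (u : S.obj p ⟶ A) : T.obj p ⟶ G.obj A :=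
  η.inv.app p ≫ G.map u

lemma toG_id (p : D) : toG η (𝟙 (S.obj p)) = η.inv.app p := by
  simp [toG]

lemma toG_comp {p : D} {A B : E} (u : S.obj p ⟶ A) (f : A ⟶ B) :
    toG η (u ≫ f) = toG η u ≫ G.map f := by
  simp [toG]

lemma toG_map_comp {p q : D} (i : p ⟶ q) {A : E} (v : S.obj q ⟶ A) :
    toG η (S.map i ≫ v) = T.map i ≫ toG η v := by
  rw [toG, toG, Functor.map_comp, ← Category.assoc, ← Category.assoc]
  exact congrArg (· ≫ G.map v) (η.inv.naturality i).symm

lemma toG_surjective [Abelian E] [PreservesFiniteColimits G] {p : D} {A : E}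
    (w : S.obj p ⟶ A) [Epi w] : Function.Surjective (toG η w) :=
  ((ModuleCat.epi_iff_surjective _).mp (G.map_epi w)).comp
    (ConcreteCategory.bijective_of_isIso (η.inv.app p)).2

lemma toG_app_congr
    (hc : ∀ (p : D) (A : E) (w : S.obj p ⟶ A) (a : End T) (x : T.obj p),
      toG η w x = 0 → toG η w (a.app p x) = 0)
    {p : D} {A : E} (w : S.obj p ⟶ A) (a : End T) {x x' : T.obj p}
    (h : toG η w x = toG η w x') : toG η w (a.app p x) = toG η w (a.app p x') := by
  have := hc p A w a (x - x') (by rw [map_sub, h, sub_self])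
  rwa [map_sub, map_sub, sub_eq_zero] at this

include η in
lemma exists_common_factorization [Abelian E] [G.Faithful] [PreservesFiniteLimits G]
    (ha : ∀ p p' : D, ∃ (q : D) (i : p ⟶ q) (i' : p' ⟶ q),
      IsIso (biprod.desc (T.map i) (T.map i')))
    {p p' : D} {A : E} (u : S.obj p ⟶ A) (u' : S.obj p' ⟶ A) :
    ∃ (q : D) (i : p ⟶ q) (i' : p' ⟶ q) (v : S.obj q ⟶ A),
      S.map i ≫ v = u ∧ S.map i' ≫ v = u' := by
  obtain ⟨q, i, i', hT⟩ := ha p p'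
  have := preservesBinaryBiproducts_of_preservesBinaryProducts G
  have hG : IsIso (biprod.desc (G.map (S.map i)) (G.map (S.map i'))) :=
    isIso_biprod_desc_of_iso (F := S ⋙ G) η i i'
  rw [← biprod.mapBiprod_inv_map_desc] at hG
  have : IsIso (G.map (biprod.desc (S.map i) (S.map i'))) :=
    IsIso.of_isIso_comp_left (G.mapBiprod _ _).inv _
  have : IsIso (biprod.desc (S.map i) (S.map i')) := isIso_of_reflects_iso _ G
  refine ⟨q, i, i', inv (biprod.desc (S.map i) (S.map i')) ≫ biprod.desc u u', ?_, ?_⟩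
  · simpa only [biprod.inl_desc_assoc, biprod.inl_desc] using
      biprod.inl ≫= IsIso.hom_inv_id_assoc (biprod.desc (S.map i) (S.map i')) (biprod.desc u u')
  · simpa only [biprod.inr_desc_assoc, biprod.inr_desc] using
      biprod.inr ≫= IsIso.hom_inv_id_assoc (biprod.desc (S.map i) (S.map i')) (biprod.desc u u')

lemma toG_app_congr_of_eq [Abelian E] [G.Faithful] [PreservesFiniteLimits G]
    (ha : ∀ p p' : D, ∃ (q : D) (i : p ⟶ q) (i' : p' ⟶ q),
      IsIso (biprod.desc (T.map i) (T.map i')))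
    (hc : ∀ (p : D) (A : E) (w : S.obj p ⟶ A) (a : End T) (x : T.obj p),
      toG η w x = 0 → toG η w (a.app p x) = 0)
    {p p' : D} {A : E} {u : S.obj p ⟶ A} {u' : S.obj p' ⟶ A} {x : T.obj p} {x' : T.obj p'}
    (h : toG η u x = toG η u' x') (a : End T) :
    toG η u (a.app p x) = toG η u' (a.app p' x') := by
  obtain ⟨q, i, i', v, rfl, rfl⟩ := exists_common_factorization η ha u u'
  simp only [toG_map_comp, ModuleCat.comp_apply, ← NatTrans.naturality_apply] at h ⊢
  exact toG_app_congr η hc v a h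

variable (hb : ∀ A : E, ∃ (p : D) (w : S.obj p ⟶ A), Epi w)

def cover (A : E) : Σ p : D, S.obj p ⟶ A :=
  ⟨(hb A).choose, (hb A).choose_spec.choose⟩

lemma cover_epi (A : E) : Epi (cover hb A).2 :=
  (hb A).choose_spec.choose_spec

variable [Abelian E] [PreservesFiniteColimits G]

lemma toG_cover_surjective (A : E) : Function.Surjective (toG η (cover hb A).2) :=
  haveI := cover_epi hb A
  toG_surjective η _

def endAct {A : E} (a : End T) (y : G.obj A) : G.obj A :=
  toG η (cover hb A).2 (a.app _ (Function.surjInv (toG_cover_surjective η hb A) y))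

lemma endAct_algebraMap {A : E} (r : R) (y : G.obj A) :
    endAct η hb (algebraMap R (End T) r) y = r • y := by
  rw [endAct, algebraMap_app_apply, map_smul, Function.surjInv_eq (toG_cover_surjective η hb A) y]

variable [G.Faithful] [PreservesFiniteLimits G]
    (ha : ∀ p p' : D, ∃ (q : D) (i : p ⟶ q) (i' : p' ⟶ q),
      IsIso (biprod.desc (T.map i) (T.map i')))
    (hc : ∀ (p : D) (A : E) (w : S.obj p ⟶ A) (a : End T) (x : T.obj p),
      toG η w x = 0 → toG η w (a.app p x) = 0)

include ha hc

lemma toG_app_eq_endAct {p : D} {A : E} (u : S.obj p ⟶ A) (a : End T) (x : T.obj p) :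
    toG η u (a.app p x) = endAct η hb a (toG η u x) :=
  toG_app_congr_of_eq η ha hc (Function.surjInv_eq _ _).symm a

lemma map_endAct {A B : E} (f : A ⟶ B) (a : End T) (y : G.obj A) :
    G.map f (endAct η hb a y) = endAct η hb a (G.map f y) := by
  obtain ⟨x, rfl⟩ := toG_cover_surjective η hb A y
  rw [← toG_app_eq_endAct η hb ha hc, ← ModuleCat.comp_apply, ← toG_comp,
    toG_app_eq_endAct η hb ha hc, toG_comp, ModuleCat.comp_apply]

lemma etaInv_app_eq_endAct {p : D} (a : End T) (x : T.obj p) :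
    η.inv.app p (a.app p x) = endAct η hb a (η.inv.app p x) := by
  simpa only [toG_id] using toG_app_eq_endAct η hb ha hc (𝟙 (S.obj p)) a x

abbrev endModule (A : E) : Module (End T) (G.obj A) :=
  letI := tautModule T (cover hb A).1
  letI : SMul (End T) (G.obj A) := ⟨endAct η hb⟩
  (toG_cover_surjective η hb A).module (End T) (f := (toG η (cover hb A).2).hom.toAddMonoidHom)
    (toG_app_eq_endAct η hb ha hc _)

def liftG : E ⥤ ModuleCat (End T) where
  obj A := @ModuleCat.of _ _ (G.obj A) _ (endModule η hb ha hc A)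
  map {A B} f :=
    letI := endModule η hb ha hc A
    letI := endModule η hb ha hc B
    ModuleCat.ofHom
      { toFun := G.map f
        map_add' := map_add (G.map f).hom
        map_smul' := map_endAct η hb ha hc f }
  map_id A := by ext; simp
  map_comp f g := by
    ext x
    change G.map (f ≫ g) x = G.map g (G.map f x)
    simp

def liftGCompIso : liftG η hb ha hc ⋙ ModuleCat.restrictScalars (algebraMap R (End T)) ≅ G :=
  NatIso.ofComponents
    (fun A =>
      letI := endModule η hb ha hc A
      restrictScalarsIsoOfCompatible _ (G.obj A) (endAct_algebraMap η hb))
    (fun f => by ext; rfl)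

def liftGTautIso : S ⋙ liftG η hb ha hc ≅ tautFunctor T :=
  NatIso.ofComponents
    (fun p =>
      letI := tautModule T p
      letI := endModule η hb ha hc (S.obj p)
      LinearEquiv.toModuleIso (X₁ := T.obj p) (X₂ := G.obj (S.obj p))
        { ((η.app p).symm).toLinearEquiv with
          map_smul' := etaInv_app_eq_endAct η hb ha hc } |>.symm)
    (fun f => by
      ext y
      exact NatTrans.naturality_apply η.hom f y)

variable (hGfin : ∀ A : E, Module.Finite R (G.obj A))

def comparisonFunctor : E ⥤ FGMod T :=
  ObjectProperty.lift _ (liftG η hb ha hc)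
    fun A => Module.Finite.equiv ((liftGCompIso η hb ha hc).app A).toLinearEquiv.symm

def comparisonFunctorCompIso : comparisonFunctor η hb ha hc hGfin ⋙ fgForget T ≅ G :=
  liftGCompIso η hb ha hc

def comparisonFunctorTautIso [∀ p : D, Module.Finite R (T.obj p)] : S ⋙ comparisonFunctor η hb ha hc hGfin ≅ tautFunctorFG T :=
  ((ObjectProperty.fullyFaithfulι _).whiskeringRight D).preimageIso (liftGTautIso η hb ha hc)

end Construction

/-- **Construction of the functor `V`** (main construction in the proof of
Proposition 2.7 of Ayoub–Barbieri-Viale, "Nori 1-motives", finite-diagram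
form).

Under conditions (a), (b) and (c), there is an `R`-linear, faithful and
exact functor `V : E ⥤ End T`-fgmod whose composition with the forgetful
functor to `ModuleCat R` is naturally isomorphic to `G` and such that
`V (S p)` is isomorphic to the tautological `End T`-module `T p`, naturally
in `p`. (Exactness is expressed as preservation of finite limits and finite
colimits; `R`-linearity and additivity of `V` are expressed through the
faithful forgetful functor `fgForget T`.) -/
theorem exists_comparison_functor
    [IsNoetherianRing R] [FinCategory D]
    [∀ p : D, Module.Finite R (T.obj p)]
    {E : Type u} [Category.{u} E] [Abelian E] [Linear R E]
    (G : E ⥤ ModuleCat.{u} R) [G.Faithful] [G.Additive] [G.Linear R]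
    [PreservesFiniteLimits G] [PreservesFiniteColimits G]
    (hGfin : ∀ A : E, Module.Finite R (G.obj A))
    (S : D ⥤ E) (η : S ⋙ G ≅ T)
    -- condition (a)
    (conda : ∀ p p' : D, ∃ (q : D) (i : p ⟶ q) (i' : p' ⟶ q),
      IsIso (biprod.desc (T.map i) (T.map i')))
    -- condition (b)
    (condb : ∀ A : E, ∃ (p : D) (w : S.obj p ⟶ A), Epi w)
    -- condition (c)
    (condc : ∀ (p : D) (A : E) (w : S.obj p ⟶ A) (a : End T) (x : T.obj p),
      (η.inv.app p ≫ G.map w) x = 0 →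
        (η.inv.app p ≫ G.map w) ((a.app p) x) = 0) :
    ∃ (V : E ⥤ FGMod T)
      (_ : V ⋙ fgForget T ≅ G)
      (_ : S ⋙ V ≅ tautFunctorFG T),
      V.Faithful ∧
      PreservesFiniteLimits V ∧ PreservesFiniteColimits V ∧
      (∀ (X Y : E) (f g : X ⟶ Y),
        (fgForget T).map (V.map (f + g)) =
          (fgForget T).map (V.map f) + (fgForget T).map (V.map g)) ∧
      (∀ (X Y : E) (r : R) (f : X ⟶ Y),
        (fgForget T).map (V.map (r • f)) =
          r • (fgForget T).map (V.map f)) := by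
  let V := comparisonFunctor η condb conda condc hGfin
  let hV : V ⋙ fgForget T ≅ G := comparisonFunctorCompIso η condb conda condc hGfin
  refine ⟨V, hV, comparisonFunctorTautIso η condb conda condc hGfin,
    Functor.Faithful.of_comp_iso hV, ?_, ?_, ?_, ?_⟩
  · have := preservesFiniteLimits_of_natIso hV.symm
    exact preservesFiniteLimits_of_reflects_of_preserves V (fgForget T)
  · have := preservesFiniteColimits_of_natIso hV.symm
    exact preservesFiniteColimits_of_reflects_of_preserves V (fgForget T)
  · have := Functor.additive_of_iso hV.symm
    exact fun X Y f g => (V ⋙ fgForget T).map_add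
  · have := Functor.linear_of_iso R hV.symm
    exact fun X Y r f => (V ⋙ fgForget T).map_smul r f

end NoriCriterion
end
end

section
/- Assume condition (a) holds, and assume condition (c) holds for all morphisms whose target is of the form S(q) with q an object of D (i.e., for every morphism w : S(p) → S(q) in E, the kernel of G(w) is an End(T)-submodule of T(p)). Then for every morphism f : S(p) → S(p') in E, the R-linear map G(f) : T(p) → T(p') is End(T)-linear, i.e. G(f)(a·x) = a·G(f)(x) for all a ∈ End(T) and x ∈ T(p). (Finite-diagram form of Lemma 2.8 of the paper.) -/
/-!
By condition (a), `T i + T i'` is an isomorphism; transporting along `η` and using that the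
faithful functor `G` reflects isomorphisms (`E` is abelian, hence balanced), so is
`S i + S i' : S p ⊞ S p' ⟶ S q`. Hence `f` and `-𝟙` glue to one `w : S q ⟶ S p'`, and
`ψ := G w` satisfies `ψ ∘ T i = G f` and `ψ ∘ T i' = -id`. So `ψ` kills
`T i x + T i' (G f x)`; by (c) it also kills the image of this element under `a`, which by
naturality of `a` is `T i (a x) + T i' (a (G f x))`, and this says `G f (a x) = a (G f x)`.
-/

open CategoryTheory CategoryTheory.Limits

namespace NoriCriterion

universe u

theorem exists_comp_eq_comp_eq_of_isIso_biprod_desc {C : Type*} [Category C]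
    [HasZeroMorphisms C] {X Y Z W : C} [HasBinaryBiproduct X Y] {i : X ⟶ Z} {i' : Y ⟶ Z}
    [IsIso (biprod.desc i i')] (g : X ⟶ W) (g' : Y ⟶ W) :
    ∃ w : Z ⟶ W, i ≫ w = g ∧ i' ≫ w = g' := by
  have hinl : i ≫ inv (biprod.desc i i') = biprod.inl := by simp [IsIso.comp_inv_eq]
  have hinr : i' ≫ inv (biprod.desc i i') = biprod.inr := by simp [IsIso.comp_inv_eq]
  exact ⟨inv (biprod.desc i i') ≫ biprod.desc g g', by simp [reassoc_of% hinl],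
    by simp [reassoc_of% hinr]⟩

theorem isIso_biprod_desc_of_isIso_biprod_desc_map {C D : Type*} [Category C] [Category D]
    [HasZeroMorphisms C] [HasZeroMorphisms D] (F : C ⥤ D) [F.PreservesZeroMorphisms]
    [F.ReflectsIsomorphisms] {X Y Z : C} [HasBinaryBiproduct X Y]
    [PreservesBinaryBiproduct X Y F] {i : X ⟶ Z} {i' : Y ⟶ Z}
    (h : IsIso (biprod.desc (F.map i) (F.map i'))) : IsIso (biprod.desc i i') := by
  have : IsIso (F.map (biprod.desc i i')) := by
    rw [← biprod.mapBiprod_hom_desc]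
    infer_instance
  exact isIso_of_reflects_iso _ F

theorem isIso_biprod_desc_map_of_iso {C D : Type*} [Category C] [Category D]
    [HasZeroMorphisms D] [HasBinaryBiproducts D] {F F' : C ⥤ D} (η : F ≅ F')
    {X Y Z : C} {i : X ⟶ Z} {i' : Y ⟶ Z}
    (h : IsIso (biprod.desc (F'.map i) (F'.map i'))) :
    IsIso (biprod.desc (F.map i) (F.map i')) := by
  have : biprod.desc (F.map i) (F.map i') = (biprod.mapIso (η.app X) (η.app Y)).hom ≫
      biprod.desc (F'.map i) (F'.map i') ≫ η.inv.app Z := by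
    ext <;> simp
  rw [this]
  infer_instance

theorem apply_app_eq_app_apply_of_ker_invariant {R : Type*} [Ring R] {D : Type*} [Category D]
    {T : D ⥤ ModuleCat R} (a : End T) {p p' q : D} (i : p ⟶ q) (i' : p' ⟶ q)
    {φ : T.obj p ⟶ T.obj p'} {ψ : T.obj q ⟶ T.obj p'} (hi : T.map i ≫ ψ = φ)
    (hi' : T.map i' ≫ ψ = -𝟙 _) (hψ : ∀ z, ψ z = 0 → ψ (a.app q z) = 0) (x : T.obj p) :
    φ (a.app p x) = a.app p' (φ x) := by
  have hφ (y : T.obj p) : ψ (T.map i y) = φ y := by simp [← hi]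
  have hneg (y : T.obj p') : ψ (T.map i' y) = -y := by
    simpa using ConcreteCategory.congr_hom hi' y
  have hnat {r s : D} (g : r ⟶ s) (y : T.obj r) : a.app s (T.map g y) = T.map g (a.app r y) :=
    ConcreteCategory.congr_hom (a.naturality g) y
  have := hψ (T.map i x + T.map i' (φ x)) (by simp [hφ, hneg])
  rwa [map_add, hnat, hnat, map_add, hφ, hneg, add_neg_eq_zero] at this

/-- **Lemma 2.8** (finite-diagram form): under condition (a), and condition
(c) for morphisms with target `S.obj q`, for every `f : S.obj p ⟶ S.obj p'`
the map `G.map f`, transported via `η` to a map `T.obj p ⟶ T.obj p'`, is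
`End T`-linear: it intertwines the tautological actions `a • x = a.app p x`. -/
theorem map_equivariant
    {R : Type u} [CommRing R] [IsNoetherianRing R]
    {D : Type u} [SmallCategory D] [FinCategory D]
    (T : D ⥤ ModuleCat.{u} R)
    [∀ p : D, Module.Finite R (T.obj p)]
    {E : Type u} [Category.{u} E] [Abelian E] [Linear R E]
    (G : E ⥤ ModuleCat.{u} R) [G.Faithful] [G.Additive] [G.Linear R]
    [PreservesFiniteLimits G] [PreservesFiniteColimits G]
    (hGfin : ∀ A : E, Module.Finite R (G.obj A))
    (S : D ⥤ E) (η : S ⋙ G ≅ T)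
    -- condition (a)
    (conda : ∀ p p' : D, ∃ (q : D) (i : p ⟶ q) (i' : p' ⟶ q),
      IsIso (biprod.desc (T.map i) (T.map i')))
    -- condition (c) for morphisms with target of the form `S.obj q`
    (condcS : ∀ (p q : D) (w : S.obj p ⟶ S.obj q) (a : End T) (x : T.obj p),
      (η.inv.app p ≫ G.map w) x = 0 →
        (η.inv.app p ≫ G.map w) ((a.app p) x) = 0) :
    ∀ (p p' : D) (f : S.obj p ⟶ S.obj p') (a : End T) (x : T.obj p),
      (η.inv.app p ≫ G.map f ≫ η.hom.app p') ((a.app p) x) =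
        (a.app p') ((η.inv.app p ≫ G.map f ≫ η.hom.app p') x) := by
  intro p p' f a x
  obtain ⟨q, i, i', hT⟩ := conda p p'
  have := preservesBinaryBiproducts_of_preservesBiproducts G
  have : IsIso (biprod.desc (S.map i) (S.map i')) :=
    isIso_biprod_desc_of_isIso_biprod_desc_map G (isIso_biprod_desc_map_of_iso η hT)
  obtain ⟨w, hwi, hwi'⟩ :=
    exists_comp_eq_comp_eq_of_isIso_biprod_desc (i := S.map i) (i' := S.map i') f (-𝟙 _)
  set ψ : T.obj q ⟶ T.obj p' := η.inv.app q ≫ G.map w ≫ η.hom.app p'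
  have hψ {r : D} (g : r ⟶ q) :
      T.map g ≫ ψ = η.inv.app r ≫ G.map (S.map g ≫ w) ≫ η.hom.app p' := by
    simp only [ψ, reassoc_of% (η.inv.naturality g), Functor.map_comp, Category.assoc]
  refine apply_app_eq_app_apply_of_ker_invariant a i i' ((hψ i).trans (by rw [hwi]))
    (by rw [hψ, hwi']; simp) (fun z hz ↦ ?_) x
  have hz' : (η.inv.app q ≫ G.map w) z = 0 := by
    simpa [ψ] using congrArg (η.inv.app p') hz
  simpa [ψ] using congrArg (η.hom.app p') (condcS q p' w a z hz')

end NoriCriterion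
end
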